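/- arXiv:math/0311481 — 3 statements merged into one kernel-verified Lean document; each statement's English description precedes it below -/
import Mathlib

section
/- For every dimension d ≥ 1 and every exponent α > 0 there is a constant C = C(d) > 0 with the following property: for every n ≥ 1, every family of points v_1, …, v_n ∈ [0,1]^d, and every minimal spanning tree T over v_1, …, v_n, one has E_α(T) = Σ_{{i,j} ∈ E(T)} ‖v_i − v_j‖^α ≤ C^α · n^{max(0, 1 − α/d)}. -/
/-- The `α`-energy of a graph `T` on vertex set `Fin n`, with vertex `i` placed at
`v i` in the metric space `X`: the sum over the edges `{i,j}` of `T` of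
`dist (v i) (v j) ^ α`. -/
noncomputable def energy {X : Type*} [MetricSpace X] {n : ℕ} (v : Fin n → X)
    (T : SimpleGraph (Fin n)) (α : ℝ) : ℝ :=
  ∑ e ∈ T.edgeSet.toFinite.toFinset,
    Sym2.lift ⟨fun i j => dist (v i) (v j) ^ α, fun i j => by simp only [dist_comm]⟩ e

/-- `T` is a minimal spanning tree over the points `v 0, …, v (n-1)`: it is a tree on
the vertex set `Fin n` minimizing the total edge length `E₁` among all such trees. -/
def IsMST {X : Type*} [MetricSpace X] {n : ℕ} (v : Fin n → X)
    (T : SimpleGraph (Fin n)) : Prop :=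
  T.IsTree ∧ ∀ T' : SimpleGraph (Fin n), T'.IsTree → energy v T 1 ≤ energy v T' 1

/-!
Exchanging an edge `ab` of a minimal spanning tree for a pair `uw` separated by `ab` gives
another spanning tree, so `|ab| ≤ |uw|`. Hence for distinct tree edges `ab`, `cd` one endpoint of
`ab`, say `a`, is at distance at least `|ab|` from both `c` and `d`. If also `|cd| ≤ |ab|`,
Apollonius' theorem puts `a` at distance at least `(√3/2)|ab|` from the midpoint of `cd`, so the
two midpoints are at least `|ab|/4` apart. Thus the balls of radius `|e|/8` around the midpoints
of the tree edges are pairwise disjoint, and comparing volumes gives `∑ₑ |e|^d ≤ (10 R)^d` for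
points in a ball of radius `R`. Hölder's inequality (for `α < d`), or `|e| ≤ 10 R` (for
`α ≥ d`), turns this into `∑ₑ |e|^α ≤ (10 R)^α m^max(0, 1 - α/d)` for a tree with `m < n`
edges; the cube lies in the ball of radius `√d` around `0`.
-/

namespace SimpleGraph

variable {V : Type*} {G : SimpleGraph V} {a b u w : V}

lemma Connected.reachable_deleteEdges_or (hG : G.Connected) (hab : G.Adj a b) (u : V) :
    (G.deleteEdges {s(a, b)}).Reachable u a ∨ (G.deleteEdges {s(a, b)}).Reachable u b := by
  classical
  obtain ⟨P, hP⟩ := hG.exists_isPath u a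
  by_cases hP_ab : s(a, b) ∈ P.edges
  · have hb := P.snd_mem_support_of_mem_edges hP_ab
    have ha := Walk.endpoint_notMem_support_takeUntil hP hb hab.ne
    exact Or.inr ⟨(P.takeUntil b hb).toDeleteEdges {s(a, b)}
      fun e he h => ha (by subst h; exact (P.takeUntil b hb).fst_mem_support_of_mem_edges he)⟩
  · exact Or.inl ⟨P.toDeleteEdges {s(a, b)} fun e he h => hP_ab (h ▸ he)⟩

lemma IsTree.deleteEdges_sup_edge (hG : G.IsTree) (hab : G.Adj a b)
    (huw : ¬ (G.deleteEdges {s(a, b)}).Reachable u w) :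
    (G.deleteEdges {s(a, b)} ⊔ edge u w).IsTree := by
  set D := G.deleteEdges {s(a, b)}
  have hD : D ≤ D ⊔ edge u w := le_sup_left
  have hside := hG.connected.reachable_deleteEdges_or hab
  have hadj : (D ⊔ edge u w).Adj u w :=
    Or.inr ((edge_adj ..).2 ⟨Or.inl ⟨rfl, rfl⟩, fun h => huw (h ▸ .rfl)⟩)
  have hab' : (D ⊔ edge u w).Reachable a b := by
    rcases hside u with hu | hu <;> rcases hside w with hw | hw
    · exact absurd (hu.trans hw.symm) huw
    · exact (hu.mono hD).symm.trans (hadj.reachable.trans (hw.mono hD))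
    · exact (hw.mono hD).symm.trans (hadj.symm.reachable.trans (hu.mono hD))
    · exact absurd (hu.trans hw.symm) huw
  refine ⟨(connected_iff_exists_forall_reachable _).2 ⟨a, fun x => ?_⟩,
    (hG.isAcyclic.anti (deleteEdges_le _)).sup_edge_of_not_reachable huw⟩
  rcases hside x with hx | hx
  · exact (hx.mono hD).symm
  · exact hab'.trans (hx.mono hD).symm

end SimpleGraph

open SimpleGraph

section MetricSpace

variable {X : Type*} [MetricSpace X] {n : ℕ} {v : Fin n → X} {T : SimpleGraph (Fin n)}
  {a b c d u w : Fin n}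

noncomputable def edgeLength (v : Fin n → X) : Sym2 (Fin n) → ℝ :=
  Sym2.lift ⟨fun i j => dist (v i) (v j), fun i j => dist_comm (v i) (v j)⟩

@[simp]
lemma edgeLength_mk (v : Fin n → X) (i j : Fin n) : edgeLength v s(i, j) = dist (v i) (v j) :=
  rfl

lemma edgeLength_nonneg (v : Fin n → X) (e : Sym2 (Fin n)) : 0 ≤ edgeLength v e := by
  induction e using Sym2.ind; exact dist_nonneg

lemma energy_eq_sum_edgeLength_rpow (v : Fin n → X) (T : SimpleGraph (Fin n)) (α : ℝ) :
    energy v T α = ∑ e ∈ T.edgeSet.toFinite.toFinset, edgeLength v e ^ α :=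
  Finset.sum_congr rfl fun e _ => by induction e using Sym2.ind; rfl

lemma energy_deleteEdges_sup_edge (α : ℝ) (hab : T.Adj a b) (huw : u ≠ w)
    (hadj : ¬ (T.deleteEdges {s(a, b)}).Adj u w) :
    energy v (T.deleteEdges {s(a, b)} ⊔ edge u w) α + dist (v a) (v b) ^ α
      = energy v T α + dist (v u) (v w) ^ α := by
  have hedges : (T.deleteEdges {s(a, b)} ⊔ edge u w).edgeSet.toFinite.toFinset
      = insert s(u, w) (T.edgeSet.toFinite.toFinset.erase s(a, b)) := by
    ext e
    simp only [Set.Finite.mem_toFinset, edgeSet_sup, edgeSet_deleteEdges, edgeSet_edge_of_ne huw,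
      Finset.mem_insert, Finset.mem_erase, Set.mem_union, Set.mem_sdiff, Set.mem_singleton_iff]
    tauto
  have hnew : s(u, w) ∉ T.edgeSet.toFinite.toFinset.erase s(a, b) := by
    rw [Finset.mem_erase, Set.Finite.mem_toFinset, mem_edgeSet]
    exact fun h => hadj ((deleteEdges_adj ..).2 ⟨h.2, by simpa using h.1⟩)
  have hold : s(a, b) ∈ T.edgeSet.toFinite.toFinset := by simpa using hab
  simp only [energy_eq_sum_edgeLength_rpow, hedges, Finset.sum_insert hnew,
    ← Finset.add_sum_erase _ _ hold, edgeLength_mk]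
  ring

namespace IsMST

lemma dist_le_of_not_reachable (hT : IsMST v T) (hab : T.Adj a b)
    (huw : ¬ (T.deleteEdges {s(a, b)}).Reachable u w) :
    dist (v a) (v b) ≤ dist (v u) (v w) := by
  have hswap := hT.2 _ (hT.1.deleteEdges_sup_edge hab huw)
  rw [← add_le_add_iff_right (dist (v a) (v b) ^ (1 : ℝ)),
    energy_deleteEdges_sup_edge 1 hab (by rintro rfl; exact huw .rfl) fun h => huw h.reachable]
    at hswap
  simpa using hswap

lemma dist_le_of_adj_of_adj (hT : IsMST v T) (hab : T.Adj a b) (hcd : T.Adj c d)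
    (hne : s(c, d) ≠ s(a, b)) :
    (dist (v a) (v b) ≤ dist (v a) (v c) ∧ dist (v a) (v b) ≤ dist (v a) (v d)) ∨
      (dist (v a) (v b) ≤ dist (v b) (v c) ∧ dist (v a) (v b) ≤ dist (v b) (v d)) := by
  have hcd' : (T.deleteEdges {s(a, b)}).Reachable c d :=
    ((deleteEdges_adj ..).2 ⟨hcd, by simpa using hne⟩).reachable
  have hsep : ¬ (T.deleteEdges {s(a, b)}).Reachable a b := isBridge_iff.1 <|
    isAcyclic_iff_forall_adj_isBridge.1 hT.1.isAcyclic hab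
  rcases hT.1.connected.reachable_deleteEdges_or hab c with hc | hc
  · exact Or.inr ⟨hT.dist_le_of_not_reachable hab fun h => hsep (h.trans hc).symm,
      hT.dist_le_of_not_reachable hab fun h => hsep (h.trans (hcd'.symm.trans hc)).symm⟩
  · exact Or.inl ⟨hT.dist_le_of_not_reachable hab fun h => hsep (h.trans hc),
      hT.dist_le_of_not_reachable hab fun h => hsep (h.trans (hcd'.symm.trans hc))⟩

end IsMST

end MetricSpace

section InnerProductSpace

open Metric

variable {E : Type*} [NormedAddCommGroup E] [InnerProductSpace ℝ E]

lemma div_four_le_dist_midpoint_midpoint {a b c d : E} (hcd : dist c d ≤ dist a b)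
    (hc : dist a b ≤ dist a c) (hd : dist a b ≤ dist a d) :
    dist a b / 4 ≤ dist (midpoint ℝ a b) (midpoint ℝ c d) := by
  have hapollonius :=
    EuclideanGeometry.dist_sq_add_dist_sq_eq_two_mul_dist_midpoint_sq_add_half_dist_sq a c d
  have htri := dist_triangle a (midpoint ℝ a b) (midpoint ℝ c d)
  rw [dist_left_midpoint, Real.norm_two] at htri
  by_contra! h
  nlinarith [dist_nonneg (x := a) (y := b), dist_nonneg (x := c) (y := d),
    dist_nonneg (x := a) (y := midpoint ℝ c d)]

variable {n : ℕ}

noncomputable def edgeMidpoint (v : Fin n → E) : Sym2 (Fin n) → E :=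
  Sym2.lift ⟨fun i j => midpoint ℝ (v i) (v j), fun i j => midpoint_comm (v i) (v j)⟩

@[simp]
lemma edgeMidpoint_mk (v : Fin n → E) (i j : Fin n) :
    edgeMidpoint v s(i, j) = midpoint ℝ (v i) (v j) :=
  rfl

namespace IsMST

variable {v : Fin n → E} {T : SimpleGraph (Fin n)}

lemma disjoint_ball_of_edgeLength_le (hT : IsMST v T) {e f : Sym2 (Fin n)}
    (he : e ∈ T.edgeSet) (hf : f ∈ T.edgeSet) (hef : e ≠ f)
    (hlen : edgeLength v f ≤ edgeLength v e) :
    Disjoint (ball (edgeMidpoint v e) (edgeLength v e / 8))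
      (ball (edgeMidpoint v f) (edgeLength v f / 8)) := by
  induction e using Sym2.ind with | _ a b =>
  induction f using Sym2.ind with | _ c d =>
  simp only [edgeLength_mk, edgeMidpoint_mk] at hlen ⊢
  refine ball_disjoint_ball ?_
  rcases hT.dist_le_of_adj_of_adj (a := a) (b := b) (c := c) (d := d) he hf hef.symm with
    ⟨hc, hd⟩ | ⟨hc, hd⟩
  · linarith [div_four_le_dist_midpoint_midpoint hlen hc hd]
  · have := div_four_le_dist_midpoint_midpoint (a := v b) (b := v a) (c := v c) (d := v d)
      (by rwa [dist_comm (v b)]) (by rwa [dist_comm (v b)]) (by rwa [dist_comm (v b)])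
    rw [dist_comm (v b), midpoint_comm] at this
    linarith

lemma pairwiseDisjoint_ball (hT : IsMST v T) :
    (T.edgeSet : Set (Sym2 (Fin n))).PairwiseDisjoint
      fun e => ball (edgeMidpoint v e) (edgeLength v e / 8) := by
  intro e he f hf hef
  rcases le_total (edgeLength v f) (edgeLength v e) with h | h
  · exact hT.disjoint_ball_of_edgeLength_le he hf hef h
  · exact (hT.disjoint_ball_of_edgeLength_le hf he hef.symm h).symm

end IsMST

end InnerProductSpace

section Volume

open Metric MeasureTheory Module

variable {E : Type*} [NormedAddCommGroup E] [NormedSpace ℝ E] [FiniteDimensional ℝ E]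
  [Nontrivial E]

lemma sum_pow_finrank_le_of_pairwiseDisjoint_ball {ι : Type*} {s : Finset ι} {c : ι → E}
    {r : ι → ℝ} {x : E} {R : ℝ} (hr : ∀ i ∈ s, 0 ≤ r i) (hR : 0 ≤ R)
    (hdisj : (s : Set ι).PairwiseDisjoint fun i => ball (c i) (r i))
    (hsub : ∀ i ∈ s, ball (c i) (r i) ⊆ ball x R) :
    ∑ i ∈ s, r i ^ finrank ℝ E ≤ R ^ finrank ℝ E := by
  let _ : MeasurableSpace E := borel E
  have : BorelSpace E := ⟨rfl⟩
  set μ : Measure E := Measure.addHaar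
  have hvol : ∑ i ∈ s, μ (ball (c i) (r i)) ≤ μ (ball x R) := by
    rw [← measure_biUnion_finset hdisj fun i _ => measurableSet_ball]
    exact measure_mono (Set.iUnion₂_subset hsub)
  simp only [Finset.sum_congr rfl fun i hi => μ.addHaar_ball (c i) (hr i hi),
    μ.addHaar_ball x hR, ← Finset.sum_mul] at hvol
  rw [ENNReal.mul_le_mul_iff_left (measure_ball_pos μ 0 one_pos).ne' measure_ball_lt_top.ne,
    ← ENNReal.ofReal_sum_of_nonneg fun i hi => pow_nonneg (hr i hi) _,
    ENNReal.ofReal_le_ofReal_iff (pow_nonneg hR _)] at hvol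
  exact hvol

end Volume

section MSTSum

open Metric Module

variable {E : Type*} [NormedAddCommGroup E] [InnerProductSpace ℝ E] [FiniteDimensional ℝ E]
  [Nontrivial E] {n : ℕ} {v : Fin n → E} {T : SimpleGraph (Fin n)}

lemma IsMST.sum_edgeLength_pow_finrank_le (hT : IsMST v T) {x₀ : E} {R : ℝ} (hR : 0 ≤ R)
    (hv : ∀ i, v i ∈ closedBall x₀ R) :
    ∑ e ∈ T.edgeSet.toFinite.toFinset, edgeLength v e ^ finrank ℝ E
      ≤ (10 * R) ^ finrank ℝ E := by
  have hmid (e : Sym2 (Fin n)) : edgeMidpoint v e ∈ closedBall x₀ R := by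
    induction e using Sym2.ind with
    | _ i j => exact (convex_closedBall x₀ R).midpoint_mem (hv i) (hv j)
  have hlen (e : Sym2 (Fin n)) : edgeLength v e ≤ 2 * R := by
    induction e using Sym2.ind with
    | _ i j => linarith [dist_triangle_right (v i) (v j) x₀, mem_closedBall.1 (hv i),
        mem_closedBall.1 (hv j), edgeLength_mk v i j]
  have hpack := sum_pow_finrank_le_of_pairwiseDisjoint_ball (s := T.edgeSet.toFinite.toFinset)
    (r := fun e => edgeLength v e / 8) (x := x₀) (R := 5 * R / 4)
    (fun e _ => div_nonneg (edgeLength_nonneg v e) (by norm_num)) (by positivity)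
    (hT.pairwiseDisjoint_ball.subset (by simp))
    fun e _ => ball_subset_ball' (by linarith [hlen e, mem_closedBall.1 (hmid e)])
  calc ∑ e ∈ T.edgeSet.toFinite.toFinset, edgeLength v e ^ finrank ℝ E
      = 8 ^ finrank ℝ E *
          ∑ e ∈ T.edgeSet.toFinite.toFinset, (edgeLength v e / 8) ^ finrank ℝ E := by
        simp only [Finset.mul_sum, div_pow]
        field_simp
    _ ≤ 8 ^ finrank ℝ E * (5 * R / 4) ^ finrank ℝ E := by gcongr
    _ = (10 * R) ^ finrank ℝ E := by rw [← mul_pow]; ring_nf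

end MSTSum

open Finset in
lemma Real.sum_rpow_le_of_sum_rpow_le {ι : Type*} {s : Finset ι} {x : ι → ℝ} {p α A : ℝ}
    (hx : ∀ i ∈ s, 0 ≤ x i) (hp : 0 < p) (hα : 0 < α) (hA : 0 ≤ A)
    (hsum : ∑ i ∈ s, x i ^ p ≤ A ^ p) :
    ∑ i ∈ s, x i ^ α ≤ A ^ α * (#s : ℝ) ^ max 0 (1 - α / p) := by
  rcases le_or_gt p α with hpα | hαp
  · have hmax : max 0 (1 - α / p) = 0 := max_eq_left (by rw [sub_nonpos, le_div_iff₀ hp]; simpa)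
    have hxA : ∀ i ∈ s, x i ≤ A := fun i hi => (Real.rpow_le_rpow_iff (hx i hi) hA hp).1 <|
      (single_le_sum (fun j hj => Real.rpow_nonneg (hx j hj) p) hi).trans hsum
    have hsplit (y : ℝ) (hy : 0 ≤ y) : y ^ α = y ^ p * y ^ (α - p) := by
      rw [← Real.rpow_add' hy (by linarith), add_sub_cancel]
    calc ∑ i ∈ s, x i ^ α ≤ ∑ i ∈ s, x i ^ p * A ^ (α - p) := by
          refine sum_le_sum fun i hi => ?_
          rw [hsplit _ (hx i hi)]
          have := hx i hi
          gcongr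
          exact hxA i hi
      _ ≤ A ^ p * A ^ (α - p) := by rw [← sum_mul]; gcongr
      _ = A ^ α * (#s : ℝ) ^ max 0 (1 - α / p) := by
          rw [hmax, Real.rpow_zero, mul_one, hsplit A hA]
  · have hθ : 0 < α / p := div_pos hα hp
    have hθ' : 0 < 1 - α / p := by rw [sub_pos, div_lt_one hp]; exact hαp
    have hmax : max 0 (1 - α / p) = 1 - α / p := max_eq_right hθ'.le
    have holder := Real.inner_le_Lp_mul_Lq_of_nonneg s (f := fun i => x i ^ α) (g := fun _ => 1)
      (Real.holderConjugate_one_div hθ hθ' (add_sub_cancel _ _))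
      (fun i hi => Real.rpow_nonneg (hx i hi) α) fun _ _ => zero_le_one
    have hpow : ∀ i ∈ s, (x i ^ α) ^ (1 / (α / p)) = x i ^ p := fun i hi => by
      rw [← Real.rpow_mul (hx i hi)]; congr 1; field_simp
    simp only [mul_one, Real.one_rpow, sum_const, nsmul_eq_mul, one_div_one_div,
      sum_congr rfl hpow] at holder
    calc ∑ i ∈ s, x i ^ α
        ≤ (∑ i ∈ s, x i ^ p) ^ (α / p) * (#s : ℝ) ^ (1 - α / p) := holder
      _ ≤ (A ^ p) ^ (α / p) * (#s : ℝ) ^ (1 - α / p) := by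
          gcongr
          exact sum_nonneg fun i hi => Real.rpow_nonneg (hx i hi) p
      _ = A ^ α * (#s : ℝ) ^ max 0 (1 - α / p) := by
          rw [hmax, ← Real.rpow_mul hA, mul_div_cancel₀ _ hp.ne']

open Metric in
lemma EuclideanSpace.mem_closedBall_zero_sqrt_card {ι : Type*} [Fintype ι]
    {x : EuclideanSpace ℝ ι} (hx : ∀ i, |x i| ≤ 1) :
    x ∈ closedBall 0 √(Fintype.card ι) := by
  rw [EuclideanSpace.closedBall_zero_eq _ (Real.sqrt_nonneg _), Set.mem_ofPred_eq,
    Real.sq_sqrt (Nat.cast_nonneg _)]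
  calc ∑ i, x i ^ 2 ≤ ∑ _i : ι, (1 : ℝ) :=
        Finset.sum_le_sum fun i _ => (sq_le_one_iff_abs_le_one _).2 (hx i)
    _ = Fintype.card ι := by simp

/-- For every dimension `d ≥ 1` and every exponent `α > 0` there is a constant
`C = C(d) > 0` such that for all `n ≥ 1`, all points `v 0, …, v (n-1)` in the cube
`[0,1]^d` and every minimal spanning tree `T` over them,
`E_α(T) ≤ C^α * n^(max 0 (1 - α/d))`. -/
theorem mst_energy_bound (d : ℕ) (hd : 1 ≤ d) :
    ∃ C : ℝ, 0 < C ∧ ∀ α : ℝ, 0 < α → ∀ n : ℕ, 1 ≤ n →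
      ∀ v : Fin n → EuclideanSpace ℝ (Fin d), (∀ j i, v j i ∈ Set.Icc (0:ℝ) 1) →
      ∀ T : SimpleGraph (Fin n), IsMST v T →
        energy v T α ≤ C ^ α * (n : ℝ) ^ max (0:ℝ) (1 - α / d) := by
  have : NeZero d := ⟨by omega⟩
  refine ⟨10 * √d, by positivity, fun α hα n _ v hv T hT => ?_⟩
  have hcube (j : Fin n) : v j ∈ Metric.closedBall 0 √d := by
    simpa using EuclideanSpace.mem_closedBall_zero_sqrt_card fun i =>
      abs_le.2 ⟨by linarith [(hv j i).1], (hv j i).2⟩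
  have hsum := hT.sum_edgeLength_pow_finrank_le (Real.sqrt_nonneg _) hcube
  simp only [finrank_euclideanSpace_fin, ← Real.rpow_natCast] at hsum
  have hcard : (T.edgeSet.toFinite.toFinset.card : ℝ) ≤ n := by
    have := (SimpleGraph.isTree_iff_connected_and_card.1 hT.1).2
    rw [Nat.card_coe_set_eq, Set.ncard_eq_toFinset_card _ T.edgeSet.toFinite, Nat.card_fin] at this
    exact_mod_cast (by omega : _ ≤ n)
  rw [energy_eq_sum_edgeLength_rpow]
  calc _ ≤ (10 * √d) ^ α * (T.edgeSet.toFinite.toFinset.card : ℝ) ^ max 0 (1 - α / d) :=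
        Real.sum_rpow_le_of_sum_rpow_le (fun e _ => edgeLength_nonneg v e) (by positivity) hα
          (by positivity) hsum
    _ ≤ (10 * √d) ^ α * (n : ℝ) ^ max (0:ℝ) (1 - α / d) := by gcongr
end

section
/- Let n ≥ 1 and let w : {1,…,n} × {1,…,n} → ℝ be a symmetric nonnegative edge-weight function on the complete graph on {1,…,n}. If a spanning tree T on {1,…,n} minimizes Σ_{{i,j} ∈ E(T)} w(i,j) among all trees on {1,…,n}, then for every α > 0 the tree T also minimizes Σ_{{i,j} ∈ E(T)} w(i,j)^α among all trees on {1,…,n}. -/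
/-!
Exchange argument. If an edge `uv` of `T` is not an edge of another tree `T'`, the path of `T'`
from `u` to `v` leaves the component of `u` in `T - uv` through some edge `xy`, and then both
`T - uv + xy` and `T' - xy + uv` are trees. Minimality of `T` gives `w(uv) ≤ w(xy)`, hence
`w(uv)^α ≤ w(xy)^α`, so replacing `T'` by `T' - xy + uv` does not increase the `α`-weight and
brings `T'` one edge closer to `T`. Only the order of the weights enters, never their values.
-/

open Finset

namespace SimpleGraph

variable {V : Type*} {G T T' : SimpleGraph V} {u v x y : V}

lemma Preconnected.reachable_deleteEdges_or (hG : G.Preconnected) (u v z : V) :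
    (G.deleteEdges {s(u, v)}).Reachable u z ∨ (G.deleteEdges {s(u, v)}).Reachable v z := by
  by_contra! h
  obtain ⟨p⟩ := hG u z
  obtain ⟨⟨⟨a, b⟩, hab⟩, -, ha, hb⟩ := p.exists_boundary_dart
    {w | (G.deleteEdges {s(u, v)}).Reachable u w ∨ (G.deleteEdges {s(u, v)}).Reachable v w}
    (Or.inl .rfl) (by simpa using h)
  simp only [Set.mem_ofPred_eq, not_or] at ha hb
  by_cases he : s(a, b) = s(u, v)
  · rcases Sym2.eq_iff.mp he with ⟨-, rfl⟩ | ⟨-, rfl⟩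
    · exact hb.2 .rfl
    · exact hb.1 .rfl
  · have hab' : (G.deleteEdges {s(u, v)}).Adj a b := deleteEdges_adj.mpr ⟨hab, he⟩
    rcases ha with ha | ha
    · exact hb.1 (ha.trans hab'.reachable)
    · exact hb.2 (ha.trans hab'.reachable)

lemma IsTree.deleteEdges_sup_edge_s7 (hT : T.IsTree)
    (hxy : ¬ (T.deleteEdges {s(u, v)}).Reachable x y) :
    (T.deleteEdges {s(u, v)} ⊔ edge x y).IsTree := by
  set G := T.deleteEdges {s(u, v)}
  have hle : G ≤ G ⊔ edge x y := le_sup_left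
  have hne : x ≠ y := by rintro rfl; exact hxy .rfl
  have hxy' : (G ⊔ edge x y).Reachable x y :=
    Adj.reachable (Or.inr ((adj_edge x y).mpr ⟨rfl, hne⟩))
  have huv : (G ⊔ edge x y).Reachable u v := by
    rcases hT.connected.preconnected.reachable_deleteEdges_or u v x with hx | hx <;>
      rcases hT.connected.preconnected.reachable_deleteEdges_or u v y with hy | hy
    · exact absurd (hx.symm.trans hy) hxy
    · exact (hx.mono hle).trans (hxy'.trans (hy.mono hle).symm)
    · exact (hy.mono hle).trans (hxy'.symm.trans (hx.mono hle).symm)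
    · exact absurd (hx.symm.trans hy) hxy
  refine ⟨(connected_iff_exists_forall_reachable _).2 ⟨u, fun z => ?_⟩, ?_⟩
  · rcases hT.connected.preconnected.reachable_deleteEdges_or u v z with hz | hz
    · exact hz.mono hle
    · exact huv.trans (hz.mono hle)
  · exact (hT.isAcyclic.anti (deleteEdges_le _)).sup_edge_of_not_reachable hxy

lemma IsTree.exists_exchange (hT : T.IsTree) (hT' : T'.IsTree) (huv : T.Adj u v) :
    ∃ x y, T'.Adj x y ∧ ¬ (T.deleteEdges {s(u, v)}).Reachable x y ∧
      ¬ (T'.deleteEdges {s(x, y)}).Reachable u v := by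
  classical
  have hbridge : ¬ (T.deleteEdges {s(u, v)}).Reachable u v :=
    isAcyclic_iff_forall_adj_isBridge.mp hT.isAcyclic huv
  obtain ⟨p, hp⟩ := hT'.connected.exists_isPath u v
  obtain ⟨d, hd, hx, hy⟩ :=
    p.exists_boundary_dart {w | (T.deleteEdges {s(u, v)}).Reachable u w} .rfl hbridge
  refine ⟨d.fst, d.snd, d.adj, fun h => hy (hx.trans h), fun h => ?_⟩
  obtain ⟨q, hq⟩ := reachable_deleteEdges_iff_exists_walk.mp h
  -- `q` avoids `d`, but its shortening is the unique path from `u` to `v`, which crosses `d`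
  have hpath : q.toPath = ⟨p, hp⟩ := (hT'.isAcyclic.subsingleton_path u v).elim _ _
  refine hq (q.edges_toPath_subset_edges ?_)
  rw [hpath]
  exact List.mem_map_of_mem hd

variable [Finite V]

local notation "E(" G ")" => Set.Finite.toFinset (Set.toFinite (SimpleGraph.edgeSet G))

lemma IsTree.card_toFinset_edgeSet_add_one (hT : T.IsTree) : #E(T) + 1 = Nat.card V := by
  rw [← Nat.card_eq_card_finite_toFinset]
  exact (isTree_iff_connected_and_card.mp hT).2

lemma toFinset_edgeSet_deleteEdges_sup_edge [DecidableEq V] (G : SimpleGraph V) (hne : x ≠ y) :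
    E(G.deleteEdges {s(u, v)} ⊔ edge x y) = insert s(x, y) (E(G).erase s(u, v)) := by
  ext e
  simp only [Set.Finite.mem_toFinset, edgeSet_sup, edgeSet_deleteEdges, edgeSet_edge_of_ne hne,
    Set.mem_union, Set.mem_sdiff, Set.mem_singleton_iff, mem_insert, mem_erase]
  tauto

lemma sum_edgeSet_deleteEdges_sup_edge {M : Type*} [AddCommGroup M] (f : Sym2 V → M)
    (huv : G.Adj u v) (hne : x ≠ y) (hxy : ¬ (G.deleteEdges {s(u, v)}).Adj x y) :
    ∑ e ∈ E(G.deleteEdges {s(u, v)} ⊔ edge x y), f e = ∑ e ∈ E(G), f e - f s(u, v) + f s(x, y) := by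
  classical
  rw [toFinset_edgeSet_deleteEdges_sup_edge G hne, sum_insert, sum_erase_eq_sub (by simpa)]
  · abel
  · simpa [deleteEdges_adj, and_comm] using hxy

theorem IsTree.sum_le_of_forall_sum_le {f g : Sym2 V → ℝ} (hfg : ∀ a b, f a ≤ f b → g a ≤ g b)
    (hT : T.IsTree) (hmin : ∀ T' : SimpleGraph V, T'.IsTree → ∑ e ∈ E(T), f e ≤ ∑ e ∈ E(T'), f e)
    (hT' : T'.IsTree) : ∑ e ∈ E(T), g e ≤ ∑ e ∈ E(T'), g e := by
  classical
  induction hk : #(E(T') \ E(T)) using Nat.strong_induction_on generalizing T' with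
  | _ k ih =>
  by_cases hsub : E(T) ⊆ E(T')
  · have := hT.card_toFinset_edgeSet_add_one
    have := hT'.card_toFinset_edgeSet_add_one
    rw [eq_of_subset_of_card_le hsub (by omega)]
  obtain ⟨e, heT, heT'⟩ := not_subset.mp hsub
  induction e using Sym2.ind with | _ u v
  simp only [Set.Finite.mem_toFinset, mem_edgeSet] at heT heT'
  obtain ⟨x, y, hxy, hxy_cut, huv_cut⟩ := hT.exists_exchange hT' heT
  have hxy_cut' : ¬ (T.deleteEdges {s(u, v)}).Adj x y := fun h => hxy_cut h.reachable
  have huv_cut' : ¬ (T'.deleteEdges {s(x, y)}).Adj u v := fun h => huv_cut h.reachable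
  have hf : f s(u, v) ≤ f s(x, y) := by
    have := hmin _ (hT.deleteEdges_sup_edge_s7 hxy_cut)
    rw [sum_edgeSet_deleteEdges_sup_edge f heT hxy.ne hxy_cut'] at this
    linarith
  have hxyT : ¬ T.Adj x y := fun h => hxy_cut' <| deleteEdges_adj.mpr ⟨h, fun he => heT' <| by
    rw [← mem_edgeSet, ← Set.mem_singleton_iff.mp he]
    exact hxy⟩
  have hxy_new : s(x, y) ∈ E(T') \ E(T) := by simpa [hxy] using hxyT
  have hcard : #(E(T'.deleteEdges {s(x, y)} ⊔ edge u v) \ E(T)) < k := by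
    rw [toFinset_edgeSet_deleteEdges_sup_edge T' heT.ne, insert_sdiff_of_mem _ (by simpa using heT),
      erase_sdiff_comm, card_erase_of_mem hxy_new, ← hk]
    exact Nat.sub_lt (card_pos.mpr ⟨_, hxy_new⟩) one_pos
  calc ∑ e ∈ E(T), g e
      ≤ ∑ e ∈ E(T'.deleteEdges {s(x, y)} ⊔ edge u v), g e :=
        ih _ hcard (hT'.deleteEdges_sup_edge_s7 huv_cut) rfl
    _ = ∑ e ∈ E(T'), g e - g s(x, y) + g s(u, v) :=
        sum_edgeSet_deleteEdges_sup_edge g hxy heT.ne huv_cut'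
    _ ≤ ∑ e ∈ E(T'), g e := by linarith [hfg _ _ hf]

end SimpleGraph

/-- Let `w` be a symmetric nonnegative edge-weight function on the complete graph on
`{1, …, n}`. If a spanning tree `T` minimizes the total weight `Σ_{e ∈ T} w(e)` among
all trees on `{1, …, n}`, then for every `α > 0` it also minimizes the `α`-weight
`Σ_{e ∈ T} w(e)^α` among all such trees. -/
theorem mst_minimizes_all_powers {n : ℕ} (w : Fin n → Fin n → ℝ)
    (hsymm : ∀ i j, w i j = w j i) (hnonneg : ∀ i j, 0 ≤ w i j)
    (T : SimpleGraph (Fin n)) (hT : T.IsTree)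
    (hmin : ∀ T' : SimpleGraph (Fin n), T'.IsTree →
      ∑ e ∈ T.edgeSet.toFinite.toFinset, Sym2.lift ⟨fun i j => w i j, hsymm⟩ e ≤
      ∑ e ∈ T'.edgeSet.toFinite.toFinset, Sym2.lift ⟨fun i j => w i j, hsymm⟩ e)
    (α : ℝ) (hα : 0 < α) :
    ∀ T' : SimpleGraph (Fin n), T'.IsTree →
      ∑ e ∈ T.edgeSet.toFinite.toFinset,
        Sym2.lift ⟨fun i j => w i j ^ α, fun i j => by simp only [hsymm i j]⟩ e ≤
      ∑ e ∈ T'.edgeSet.toFinite.toFinset,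
        Sym2.lift ⟨fun i j => w i j ^ α, fun i j => by simp only [hsymm i j]⟩ e := by
  refine fun T' hT' => hT.sum_le_of_forall_sum_le (fun a b hab => ?_) hmin hT'
  induction a using Sym2.ind with | _ i j
  induction b using Sym2.ind with | _ k l
  exact Real.rpow_le_rpow (hnonneg i j) hab hα.le
end

section
/- Let v_1, v_2, w_1, w_2 ∈ ℝ^d, write e_1 = (v_1, v_2), e_2 = (w_1, w_2), and suppose ‖v_1 − v_2‖ ≥ ‖w_1 − w_2‖. If the open ball of radius (1/10)‖v_1 − v_2‖ around (v_1+v_2)/2 intersects the open ball of radius (1/10)‖w_1 − w_2‖ around (w_1+w_2)/2, then there exist i, j ∈ {1, 2} such that ‖v_1 − w_i‖ < ‖v_1 − v_2‖ and ‖v_2 − w_j‖ < ‖v_1 − v_2‖. -/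
/-- Let `v₁, v₂, w₁, w₂ ∈ ℝ^d` with `‖v₁ - v₂‖ ≥ ‖w₁ - w₂‖`. If the open ball of radius
`(1/10)‖v₁ - v₂‖` around `(v₁ + v₂)/2` meets the open ball of radius `(1/10)‖w₁ - w₂‖`
around `(w₁ + w₂)/2`, then there are `i, j ∈ {1, 2}` with `‖v₁ - wᵢ‖ < ‖v₁ - v₂‖` and
`‖v₂ - wⱼ‖ < ‖v₁ - v₂‖`. -/
theorem close_endpoints_of_midpoint_balls_intersect {d : ℕ}
    (v₁ v₂ w₁ w₂ : EuclideanSpace ℝ (Fin d)) (hle : ‖w₁ - w₂‖ ≤ ‖v₁ - v₂‖)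
    (hcap : (Metric.ball ((2:ℝ)⁻¹ • (v₁ + v₂)) (‖v₁ - v₂‖ / 10) ∩
      Metric.ball ((2:ℝ)⁻¹ • (w₁ + w₂)) (‖w₁ - w₂‖ / 10)).Nonempty) :
    (∃ w ∈ ({w₁, w₂} : Set (EuclideanSpace ℝ (Fin d))), ‖v₁ - w‖ < ‖v₁ - v₂‖) ∧
    (∃ w ∈ ({w₁, w₂} : Set (EuclideanSpace ℝ (Fin d))), ‖v₂ - w‖ < ‖v₁ - v₂‖) := by
  obtain ⟨x, hx1, hx2⟩ := hcap
  rw [Metric.mem_ball] at hx1 hx2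
  set L := ‖v₁ - v₂‖ with hLdef
  set l := ‖w₁ - w₂‖ with hldef
  have hl0 : 0 ≤ l := norm_nonneg _
  have hL : 0 < L := by
    have := dist_nonneg (x := x) (y := (2:ℝ)⁻¹ • (v₁ + v₂))
    linarith
  have hmm : ‖(2:ℝ)⁻¹ • (v₁ + v₂) - (2:ℝ)⁻¹ • (w₁ + w₂)‖ < L/10 + l/10 := by
    have h1 := dist_triangle ((2:ℝ)⁻¹ • (v₁ + v₂)) x ((2:ℝ)⁻¹ • (w₁ + w₂))
    rw [dist_comm ((2:ℝ)⁻¹ • (v₁ + v₂)) x] at h1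
    rw [← dist_eq_norm]
    linarith
  have key : ∀ v : EuclideanSpace ℝ (Fin d), ‖v - (2:ℝ)⁻¹ • (v₁ + v₂)‖ = L/2 →
      ∃ w ∈ ({w₁, w₂} : Set (EuclideanSpace ℝ (Fin d))), ‖v - w‖ < L := by
    intro v hv
    have hvm' : ‖v - (2:ℝ)⁻¹ • (w₁ + w₂)‖ < 7*L/10 := by
      have := norm_sub_le_norm_sub_add_norm_sub v ((2:ℝ)⁻¹ • (v₁+v₂)) ((2:ℝ)⁻¹ • (w₁+w₂))
      linarith
    have hpar := parallelogram_law_with_norm ℝ (v - (2:ℝ)⁻¹ • (w₁ + w₂)) ((2:ℝ)⁻¹ • (w₁ - w₂))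
    have e1 : v - (2:ℝ)⁻¹ • (w₁ + w₂) + (2:ℝ)⁻¹ • (w₁ - w₂) = v - w₂ := by module
    have e2 : v - (2:ℝ)⁻¹ • (w₁ + w₂) - (2:ℝ)⁻¹ • (w₁ - w₂) = v - w₁ := by module
    rw [e1, e2] at hpar
    have hhalf : ‖(2:ℝ)⁻¹ • (w₁ - w₂)‖ = l/2 := by
      rw [norm_smul, hldef]
      simp
      ring
    rw [hhalf] at hpar
    by_contra hcon
    push_neg at hcon
    have h1 := hcon w₁ (by simp)
    have h2 := hcon w₂ (by simp)
    nlinarith [norm_nonneg (v - w₁), norm_nonneg (v - w₂),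
      norm_nonneg (v - (2:ℝ)⁻¹ • (w₁ + w₂))]
  constructor
  · apply key v₁
    have e : v₁ - (2:ℝ)⁻¹ • (v₁ + v₂) = (2:ℝ)⁻¹ • (v₁ - v₂) := by module
    rw [e, norm_smul, ← hLdef]
    simp
    ring
  · apply key v₂
    have e : v₂ - (2:ℝ)⁻¹ • (v₁ + v₂) = (-(2:ℝ)⁻¹) • (v₁ - v₂) := by module
    rw [e, norm_smul, ← hLdef]
    simp
    ring
end
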